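/- Let S be a cofibrantly generated model category and (C, D) a pair of small categories. If η : X → Y is a D-weak equivalence in S^C and both X and Y satisfy D-codescent, then η is a C-weak equivalence. -/

import Mathlib

/-! Preliminaries: basic notions of homotopical algebra (lifting properties,
model structures, transfinite compositions, relative cell complexes, smallness,
cofibrant generation) and the relative model structure `U_S(C,D)` on functor
categories, following Balmer–Matthey, "Codescent theory I". -/

universe w v u u₂ u₃

open CategoryTheory Limits

namespace Codescent

set_option linter.dupNamespace false

section Lifting

variable {M : Type u} [Category.{v} M]

/-- The class of morphisms having the left lifting property with respect to all
morphisms in `K`. -/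
def llp (K : MorphismProperty M) : MorphismProperty M :=
  fun _ _ f => ∀ ⦃X Y : M⦄ (g : X ⟶ Y), K g → HasLiftingProperty f g

/-- The class of morphisms having the right lifting property with respect to all
morphisms in `K`. -/
def rlp (K : MorphismProperty M) : MorphismProperty M :=
  fun _ _ g => ∀ ⦃A B : M⦄ (f : A ⟶ B), K f → HasLiftingProperty f g

/-- Intersection of two classes of morphisms. -/
def inter (P Q : MorphismProperty M) : MorphismProperty M :=
  fun _ _ f => P f ∧ Q f

/-- `f` is a retract of `g` (as objects of the arrow category). -/
def RetractHom {X Y X' Y' : M} (f : X ⟶ Y) (g : X' ⟶ Y') : Prop :=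
  ∃ (i : Arrow.mk f ⟶ Arrow.mk g) (r : Arrow.mk g ⟶ Arrow.mk f), i ≫ r = 𝟙 (Arrow.mk f)

/-- The object `c` is a retract of the object `d`. -/
def IsRetractObj (c d : M) : Prop :=
  ∃ (i : c ⟶ d) (r : d ⟶ c), i ≫ r = 𝟙 c

/-- A functorial factorization of every morphism as a morphism in `L` followed by
a morphism in `R`. -/
structure FunctorialFact (L R : MorphismProperty M) where
  Z : Arrow M ⥤ M
  ι : (Arrow.leftFunc : Arrow M ⥤ M) ⟶ Z
  π : Z ⟶ (Arrow.rightFunc : Arrow M ⥤ M)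
  fac : ∀ f : Arrow M, ι.app f ≫ π.app f = f.hom
  mem_left : ∀ f : Arrow M, L (ι.app f)
  mem_right : ∀ f : Arrow M, R (π.app f)

end Lifting

/-- A (Quillen) model structure on a category `M`: classes of weak equivalences,
cofibrations and fibrations satisfying MC2–MC5 (MC1, completeness and
cocompleteness, is imposed separately as `HasLimits`/`HasColimits`). -/
structure ModelStructure (M : Type u) [Category.{v} M] where
  weq : MorphismProperty M
  cof : MorphismProperty M
  fib : MorphismProperty M
  /-- MC2, two-out-of-three -/
  weq_comp : ∀ {X Y Z : M} (f : X ⟶ Y) (g : Y ⟶ Z), weq f → weq g → weq (f ≫ g)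
  weq_cancel_left : ∀ {X Y Z : M} (f : X ⟶ Y) (g : Y ⟶ Z), weq f → weq (f ≫ g) → weq g
  weq_cancel_right : ∀ {X Y Z : M} (f : X ⟶ Y) (g : Y ⟶ Z), weq g → weq (f ≫ g) → weq f
  /-- MC3, closure under retracts -/
  weq_retract : ∀ {X Y X' Y' : M} (f : X ⟶ Y) (g : X' ⟶ Y'), RetractHom f g → weq g → weq f
  cof_retract : ∀ {X Y X' Y' : M} (f : X ⟶ Y) (g : X' ⟶ Y'), RetractHom f g → cof g → cof f
  fib_retract : ∀ {X Y X' Y' : M} (f : X ⟶ Y) (g : X' ⟶ Y'), RetractHom f g → fib g → fib f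
  /-- MC4, lifting -/
  cof_lift : ∀ {A B X Y : M} (f : A ⟶ B) (g : X ⟶ Y),
    cof f → weq g → fib g → HasLiftingProperty f g
  fib_lift : ∀ {A B X Y : M} (f : A ⟶ B) (g : X ⟶ Y),
    weq f → cof f → fib g → HasLiftingProperty f g
  /-- MC5, functorial factorizations -/
  fact₁ : FunctorialFact (M := M) cof (inter weq fib)
  fact₂ : FunctorialFact (M := M) (inter weq cof) fib

section Transfinite

/-- A well-ordered type (with bottom element and successors), the index for
transfinite compositions (a "λ-sequence" index). -/
structure WOType : Type (w + 1) where
  carrier : Type w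
  [lin : LinearOrder carrier]
  [succ : SuccOrder carrier]
  [bot : OrderBot carrier]
  [wf : WellFoundedLT carrier]

attribute [instance] WOType.lin WOType.succ WOType.bot WOType.wf

variable {M : Type u} [Category.{v} M] {N : Type u₂} [Category.{v} N]

/-- The class of pushouts of morphisms of `K`. -/
def pushoutsOf (K : MorphismProperty M) : MorphismProperty M :=
  fun X Y f => ∃ (A B : M) (g : A ⟶ B) (t : A ⟶ X) (b : B ⟶ Y), K g ∧ IsPushout g t b f

/-- The inclusion functor of `{i // i < j}` into a preorder `J`. -/
def iioIncl {J : Type w} [Preorder J] (j : J) : {i : J // i < j} ⥤ J where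
  obj i := i.1
  map {i i'} h := homOfLE (Subtype.coe_le_coe.mpr (leOfHom h))

/-- The cocone on the restriction of `F : J ⥤ M` to `{i // i < j}` with apex `F.obj j`. -/
def iioCocone {J : Type w} [Preorder J] (F : J ⥤ M) (j : J) : Cocone (iioIncl j ⋙ F) where
  pt := F.obj j
  ι :=
    { app := fun i => F.map (homOfLE i.2.le)
      naturality := fun i i' h => by
        dsimp
        rw [Category.comp_id, ← F.map_comp]
        rfl }

/-- `F : J ⥤ M` is a (continuous) transfinite sequence all of whose successor
maps lie in the class `P`. -/
structure IsChainOf (P : MorphismProperty M) {J : Type w} [LinearOrder J] [SuccOrder J]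
    (F : J ⥤ M) : Prop where
  succ_mem : ∀ j : J, ¬ IsMax j → P (F.map (homOfLE (Order.le_succ j)))
  limit_isColimit : ∀ j : J, Order.IsSuccLimit j → Nonempty (IsColimit (iioCocone F j))

/-- The class of relative `K`-cells: transfinite compositions of pushouts of
morphisms of `K`. -/
def cell (K : MorphismProperty M) : MorphismProperty M :=
  fun X Y f => ∃ (J : WOType.{v}) (F : J.carrier ⥤ M)
    (_ : IsChainOf (pushoutsOf K) F) (c : Cocone F) (_ : IsColimit c)
    (e : X ≅ F.obj ⊥) (e' : c.pt ≅ Y), f = e.hom ≫ c.ι.app ⊥ ≫ e'.hom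

/-- A linear order is `κ`-filtered when it has no top element and every subset of
cardinality at most `κ` is bounded above. -/
def KFiltered (κ : Cardinal.{w}) (J : Type w) [LinearOrder J] : Prop :=
  (∀ j : J, ∃ j' : J, j < j') ∧
    ∀ s : Set J, Cardinal.mk s ≤ κ → ∃ j : J, ∀ i ∈ s, i ≤ j

/-- The object `d` is small relative to the class `K`: for some cardinal `κ`,
morphisms from `d` into the colimit of any `κ`-filtered well-ordered continuous
sequence with successor maps in `K` factor, essentially uniquely, through some
stage of the sequence. -/
def IsSmallRel (d : M) (K : MorphismProperty M) : Prop :=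
  ∃ κ : Cardinal.{v}, ∀ (J : WOType.{v}), KFiltered κ J.carrier →
    ∀ (F : J.carrier ⥤ M), IsChainOf K F →
    ∀ (c : Cocone F), IsColimit c →
      (∀ g : d ⟶ c.pt, ∃ (j : J.carrier) (h : d ⟶ F.obj j), h ≫ c.ι.app j = g) ∧
      (∀ (j j' : J.carrier) (h : d ⟶ F.obj j) (h' : d ⟶ F.obj j'),
        h ≫ c.ι.app j = h' ≫ c.ι.app j' →
          ∃ (k : J.carrier) (l : j ≤ k) (l' : j' ≤ k),
            h ≫ F.map (homOfLE l) = h' ≫ F.map (homOfLE l'))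

/-- The model structure `P` is cofibrantly generated, with set of generating
cofibrations `I` and set of generating trivial cofibrations `J`. -/
structure IsCofGen (P : ModelStructure M) (I J : MorphismProperty M) : Prop where
  small_I : ∀ ⦃X Y : M⦄ (f : X ⟶ Y), I f → IsSmallRel X (cell I)
  small_J : ∀ ⦃X Y : M⦄ (f : X ⟶ Y), J f → IsSmallRel X (cell J)
  fib_eq : P.fib = rlp J
  trivFib_eq : inter P.weq P.fib = rlp I

/-- A functor preserves pushouts. -/
def PreservesPushouts (G : M ⥤ N) : Prop :=
  ∀ ⦃Z X Y P : M⦄ (f : Z ⟶ X) (g : Z ⟶ Y) (inl : X ⟶ P) (inr : Y ⟶ P),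
    IsPushout f g inl inr → IsPushout (G.map f) (G.map g) (G.map inl) (G.map inr)

/-- A functor preserves transfinite compositions: it preserves colimits of
diagrams indexed by well-ordered types. -/
def PreservesTransfiniteCompositions (G : M ⥤ N) : Prop :=
  ∀ (J : Type v) [LinearOrder J] [WellFoundedLT J] (F : J ⥤ M) (c : Cocone F),
    IsColimit c → Nonempty (IsColimit (G.mapCocone c))

/-- The image `{G(f) | f ∈ K}` of a class of morphisms under a functor. -/
def strictImage (G : M ⥤ N) (K : MorphismProperty M) : MorphismProperty N :=
  fun _ _ g => ∃ (A B : M) (f : A ⟶ B), K f ∧ Arrow.mk (G.map f) = Arrow.mk g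

end Transfinite

section CofRep

variable {M : Type u} [Category.{v} M]

/-- The cofibrant replacement of `X` given by the functorial factorization of
`∅ ⟶ X`. -/
noncomputable def cofRep (P : ModelStructure M) [HasInitial M] (X : M) : M :=
  P.fact₁.Z.obj (Arrow.mk (initial.to X))

/-- The canonical trivial fibration `QX ⟶ X` from the cofibrant replacement. -/
noncomputable def cofRepHom (P : ModelStructure M) [HasInitial M] (X : M) :
    cofRep P X ⟶ X :=
  P.fact₁.π.app (Arrow.mk (initial.to X))

/-- The functor `X ↦ (∅ ⟶ X)` to the arrow category. -/
noncomputable def toArrowInit (M : Type u) [Category.{v} M] [HasInitial M] : M ⥤ Arrow M where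
  obj X := Arrow.mk (initial.to X)
  map {X Y} f := Arrow.homMk (u := 𝟙 _) (v := f) (by apply initial.hom_ext)

/-- The cofibrant replacement functor of the model structure `P`. -/
noncomputable def qFunctor (P : ModelStructure M) [HasInitial M] : M ⥤ M :=
  toArrowInit M ⋙ P.fact₁.Z

end CofRep

section FunctorCat

variable {S : Type u} [Category.{v} S]

/-- The class of morphisms in `S^C` that belong objectwise on `D` to the class `P`;
for `P` the weak equivalences (resp. fibrations) of a model structure these are
the `D`-weak equivalences (resp. the `D`-fibrations). -/
def objProp {C : Type v} [SmallCategory C] (P : MorphismProperty S) (D : Set C) :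
    MorphismProperty (C ⥤ S) :=
  fun _ _ η => ∀ d ∈ D, P (η.app d)

/-- Trivial `D`-fibrations in `S^C`. -/
def dTrivFib {C : Type v} [SmallCategory C] (P : ModelStructure S) (D : Set C) :
    MorphismProperty (C ⥤ S) :=
  inter (objProp P.weq D) (objProp P.fib D)

/-- `D`-cofibrations in `S^C`: the morphisms having the left lifting property with
respect to all trivial `D`-fibrations. -/
def dCof {C : Type v} [SmallCategory C] (P : ModelStructure S) (D : Set C) :
    MorphismProperty (C ⥤ S) :=
  llp (dTrivFib P D)

variable [HasColimits S]

/-- `D`-cofibrant objects of `S^C`. -/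
def dCofibrant {C : Type v} [SmallCategory C] (P : ModelStructure S) (D : Set C)
    (X : C ⥤ S) : Prop :=
  dCof P D (initial.to X)

/-- The model structure `U_S(C,D)` on `S^C`: a model structure whose weak
equivalences are the `D`-weak equivalences, whose fibrations are the
`D`-fibrations and whose cofibrations are the `D`-cofibrations. -/
structure RelStructure (P : ModelStructure S) (C : Type v) [SmallCategory C] (D : Set C) where
  N : ModelStructure (C ⥤ S)
  weq_eq : N.weq = objProp P.weq D
  fib_eq : N.fib = objProp P.fib D
  cof_eq : N.cof = dCof P D

/-- `X` satisfies `D`-codescent at `c`: the cofibrant replacement morphism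
`Q_{C,D} X ⟶ X` in `U_S(C,D)` is a weak equivalence at `c`. -/
def CodescentAt {C : Type v} [SmallCategory C] (P : ModelStructure S) {D : Set C}
    (U : RelStructure P C D) (X : C ⥤ S) (c : C) : Prop :=
  P.weq ((cofRepHom U.N X).app c)

/-- `X` satisfies `D`-codescent: the cofibrant replacement morphism
`Q_{C,D} X ⟶ X` is a `C`-weak equivalence. -/
def Codescent {C : Type v} [SmallCategory C] (P : ModelStructure S) {D : Set C}
    (U : RelStructure P C D) (X : C ⥤ S) : Prop :=
  ∀ c : C, CodescentAt P U X c

/-- The coproduct property for weak equivalences. -/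
def CoproductProperty (P : ModelStructure S) : Prop :=
  ∀ (ι : Type v) (X Y : ι → S) (f : ∀ i, X i ⟶ Y i),
    (∀ i, P.weq (f i)) ↔ P.weq (Limits.Sigma.map f)

end FunctorCat

section Pairs

variable {A : Type v} [SmallCategory A] {C : Type v} [SmallCategory C]

/-- Two subsets of objects are retract equivalent. -/
def RetractEquiv (D D' : Set C) : Prop :=
  (∀ d ∈ D, ∃ d' ∈ D', IsRetractObj d d') ∧ (∀ d' ∈ D', ∃ d ∈ D, IsRetractObj d' d)

/-- `Φ : (A,B) ⟶ (C,D)` is left glossy. -/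
def LeftGlossy (Φ : A ⥤ C) (B : Set A) : Prop :=
  ∀ b ∈ B, ∃ (ι : Type v) (tgt : ι → A) (β : ∀ i, Φ.obj b ⟶ Φ.obj (tgt i)),
    (∀ i, tgt i ∈ B) ∧
      ∀ (a : A) (α : Φ.obj b ⟶ Φ.obj a),
        ∃! p : (i : ι) × (tgt i ⟶ a), β p.1 ≫ Φ.map p.2 = α

/-- `Φ : (A,B) ⟶ (C,D)` is right glossy. -/
def RightGlossy (Φ : A ⥤ C) (B : Set A) : Prop :=
  ∀ b ∈ B, ∃ (ι : Type v) (src : ι → A) (β : ∀ j, Φ.obj (src j) ⟶ Φ.obj b),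
    (∀ j, src j ∈ B) ∧
      ∀ (a : A) (α : Φ.obj a ⟶ Φ.obj b),
        ∃! p : (j : ι) × (a ⟶ src j), Φ.map p.2 ≫ β p.1 = α

/-- A subset of objects is left absorbant: the source of any morphism whose
target lies in the subset also lies in the subset. -/
def LeftAbsorbant (D : Set C) : Prop :=
  ∀ ⦃c c' : C⦄, (c ⟶ c') → c' ∈ D → c ∈ D

end Pairs

end Codescent

/-! The cofibrant replacement `Qη : QX ⟶ QY` of `η` in `U_S(C,D)` is a `D`-weak equivalence
between `D`-cofibrant objects. Evaluation at any `c : C` has the right adjoint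
`Z ↦ (c' ↦ ∏_{c' ⟶ c} Z)`, which carries fibrations to `D`-fibrations; so evaluation at `c` sends
trivial `D`-cofibrations to weak equivalences, and by Ken Brown's lemma it sends `Qη` to a weak
equivalence. Codescent makes `QX ⟶ X` and `QY ⟶ Y` weak equivalences at `c`, and two-out-of-three
in the naturality square gives `η.app c`. -/

universe v₂

namespace Codescent

variable {M : Type u} [Category.{v} M]

lemma retractHom_of_retractArrow {X Y X' Y' : M} {f : X ⟶ Y} {g : X' ⟶ Y'}
    (h : RetractArrow f g) : RetractHom f g :=
  ⟨h.i, h.r, h.retract⟩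

namespace ModelStructure

variable (N : ModelStructure M)

lemma exists_cof_trivFib_fac {X Y : M} (f : X ⟶ Y) :
    ∃ (Z : M) (i : X ⟶ Z) (p : Z ⟶ Y), N.cof i ∧ N.weq p ∧ N.fib p ∧ i ≫ p = f :=
  ⟨_, _, _, N.fact₁.mem_left (Arrow.mk f), (N.fact₁.mem_right _).1, (N.fact₁.mem_right _).2,
    N.fact₁.fac _⟩

lemma exists_trivCof_fib_fac {X Y : M} (f : X ⟶ Y) :
    ∃ (Z : M) (i : X ⟶ Z) (p : Z ⟶ Y), N.weq i ∧ N.cof i ∧ N.fib p ∧ i ≫ p = f :=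
  ⟨_, _, _, (N.fact₂.mem_left (Arrow.mk f)).1, (N.fact₂.mem_left _).2, N.fact₂.mem_right _,
    N.fact₂.fac _⟩

lemma cof_eq_llp : N.cof = (inter N.weq N.fib).llp := by
  ext A B f
  refine ⟨fun hf _ _ p hp => N.cof_lift f p hf hp.1 hp.2, fun hf => ?_⟩
  obtain ⟨_, i, p, hi, hpw, hpf, hfac⟩ := N.exists_cof_trivFib_fac f
  have := hf p ⟨hpw, hpf⟩
  exact N.cof_retract f i (retractHom_of_retractArrow (.ofLeftLiftingProperty hfac)) hi

lemma fib_eq_rlp : N.fib = (inter N.weq N.cof).rlp := by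
  ext X Y p
  refine ⟨fun hp _ _ i hi => N.fib_lift i p hi.1 hi.2 hp, fun hp => ?_⟩
  obtain ⟨_, i, q, hiw, hic, hq, hfac⟩ := N.exists_trivCof_fib_fac p
  have := hp i ⟨hiw, hic⟩
  exact N.fib_retract p q (retractHom_of_retractArrow (.ofRightLiftingProperty hfac)) hq

lemma weq_of_hasLiftingProperty {A B : M} (f : A ⟶ B)
    (hf : ∀ ⦃X Y : M⦄ (p : X ⟶ Y), N.fib p → HasLiftingProperty f p) : N.weq f := by
  obtain ⟨_, i, p, hiw, -, hp, hfac⟩ := N.exists_trivCof_fib_fac f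
  have := hf p hp
  exact N.weq_retract f i (retractHom_of_retractArrow (.ofLeftLiftingProperty hfac)) hiw

lemma weq_id (X : M) : N.weq (𝟙 X) :=
  N.weq_of_hasLiftingProperty _ fun _ _ _ _ => inferInstance

lemma cof_comp {X Y Z : M} {f : X ⟶ Y} {g : Y ⟶ Z} (hf : N.cof f) (hg : N.cof g) :
    N.cof (f ≫ g) := by
  rw [cof_eq_llp] at *
  exact MorphismProperty.comp_mem _ f g hf hg

lemma fib_piMap {ι : Type*} {X Y : ι → M} [HasProduct X] [HasProduct Y] (p : ∀ i, X i ⟶ Y i)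
    (hp : ∀ i, N.fib (p i)) : N.fib (Limits.Pi.map p) := by
  rw [fib_eq_rlp] at *
  intro _ _ i hi
  have := fun j => hp j i hi
  infer_instance

lemma cof_initial_to_of_cof [HasInitial M] {A B : M} (hA : N.cof (initial.to A)) {j : A ⟶ B}
    (hj : N.cof j) : N.cof (initial.to B) :=
  initial.to_comp j ▸ N.cof_comp hA hj

section Coproducts

variable [HasInitial M] [HasBinaryCoproducts M]

lemma cof_coprod_inl {A B : M} (hB : N.cof (initial.to B)) :
    N.cof (coprod.inl : A ⟶ A ⨿ B) := by
  rw [cof_eq_llp] at *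
  exact MorphismProperty.of_isPushout (IsPushout.of_hasBinaryCoproduct' A B) hB

lemma cof_coprod_inr {A B : M} (hA : N.cof (initial.to A)) :
    N.cof (coprod.inr : B ⟶ A ⨿ B) := by
  rw [cof_eq_llp] at *
  exact MorphismProperty.of_isPushout (IsPushout.of_hasBinaryCoproduct' A B).flip hA

/-- Ken Brown's lemma. Factor `(f, 𝟙) : A ⨿ B ⟶ B` as a cofibration `q` followed by a trivial
fibration `p`; then `f = (inl ≫ q) ≫ p` and `p` is a retraction of the trivial cofibration
`inr ≫ q`. -/
theorem weq_map_of_cofibrant {M' : Type u₂} [Category.{v₂} M'] (P : ModelStructure M')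
    (F : M ⥤ M')
    (hF : ∀ ⦃A B : M⦄ (j : A ⟶ B), N.cof (initial.to A) → N.cof (initial.to B) →
      N.weq j → N.cof j → P.weq (F.map j))
    {A B : M} (hA : N.cof (initial.to A)) (hB : N.cof (initial.to B)) {f : A ⟶ B}
    (hf : N.weq f) : P.weq (F.map f) := by
  obtain ⟨Z, q, p, hq, hp, -, hfac⟩ := N.exists_cof_trivFib_fac (coprod.desc f (𝟙 B))
  have hinl : (coprod.inl ≫ q) ≫ p = f := by rw [Category.assoc, hfac, coprod.inl_desc]
  have hinr : (coprod.inr ≫ q) ≫ p = 𝟙 B := by rw [Category.assoc, hfac, coprod.inr_desc]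
  have hcinl : N.cof (coprod.inl ≫ q) := N.cof_comp (N.cof_coprod_inl hB) hq
  have hcinr : N.cof (coprod.inr ≫ q) := N.cof_comp (N.cof_coprod_inr hA) hq
  have hZ : N.cof (initial.to Z) := N.cof_initial_to_of_cof hA hcinl
  have hFinl : P.weq (F.map (coprod.inl ≫ q)) :=
    hF _ hA hZ (N.weq_cancel_right _ p hp (hinl ▸ hf)) hcinl
  have hFinr : P.weq (F.map (coprod.inr ≫ q)) :=
    hF _ hB hZ (N.weq_cancel_right _ p hp (hinr ▸ N.weq_id B)) hcinr
  have hFp : P.weq (F.map p) :=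
    P.weq_cancel_left _ _ hFinr (by rw [← F.map_comp, hinr, F.map_id]; exact P.weq_id _)
  rw [← hinl, F.map_comp]
  exact P.weq_comp _ _ hFinl hFp

end Coproducts

section CofibrantReplacement

variable [HasInitial M]

lemma cof_initial_to_cofRep (X : M) : N.cof (initial.to (cofRep N X)) :=
  initial.hom_ext (N.fact₁.ι.app (Arrow.mk (initial.to X))) (initial.to (cofRep N X)) ▸
    N.fact₁.mem_left _

lemma weq_cofRepHom (X : M) : N.weq (cofRepHom N X) :=
  (N.fact₁.mem_right _).1

lemma qFunctor_map_comp_cofRepHom {X Y : M} (f : X ⟶ Y) :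
    (qFunctor N).map f ≫ cofRepHom N Y = cofRepHom N X ≫ f :=
  N.fact₁.π.naturality _

lemma weq_qFunctor_map {X Y : M} {f : X ⟶ Y} (hf : N.weq f) : N.weq ((qFunctor N).map f) :=
  N.weq_cancel_right _ _ (N.weq_cofRepHom Y) <| by
    rw [qFunctor_map_comp_cofRepHom]
    exact N.weq_comp _ _ (N.weq_cofRepHom X) hf

end CofibrantReplacement

end ModelStructure

namespace RelStructure

variable {S : Type u} [Category.{v} S] [HasLimits S] {C : Type v} [SmallCategory C]
  {P : ModelStructure S} {D : Set C} (U : RelStructure P C D)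

lemma fib_evaluationRightAdjoint_map (c : C) {X Y : S} {g : X ⟶ Y} (hg : P.fib g) :
    U.N.fib ((evaluationRightAdjoint S c).map g) := by
  rw [U.fib_eq]
  intro d _
  have : (((evaluationRightAdjoint S c).map g).app d :
      (∏ᶜ fun _ : d ⟶ c => X) ⟶ ∏ᶜ fun _ : d ⟶ c => Y) = Limits.Pi.map fun _ => g :=
    Pi.hom_ext _ _ fun _ => by erw [Pi.lift_π]
  rw [this]
  exact P.fib_piMap _ fun _ => hg

/-- Evaluation at `c` is left adjoint to `evaluationRightAdjoint S c`, which sends fibrations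
to `D`-fibrations. -/
lemma weq_app_of_trivCof {A B : C ⥤ S} (j : A ⟶ B) (hw : U.N.weq j) (hc : U.N.cof j) (c : C) :
    P.weq (j.app c) :=
  P.weq_of_hasLiftingProperty _ fun _ _ g hg =>
    ((evaluationAdjunctionLeft S c).hasLiftingProperty_iff j g).2
      (U.N.fib_lift j _ hw hc (U.fib_evaluationRightAdjoint_map c hg))

end RelStructure

end Codescent

open Codescent

theorem statement_6_general {S : Type u} [Category.{v} S] [HasLimits S] [HasColimits S]
    (P : ModelStructure S)
    {C : Type v} [SmallCategory C] (D : Set C) (U : RelStructure P C D)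
    {X Y : C ⥤ S} (η : X ⟶ Y) (hη : objProp P.weq D η)
    (hX : Codescent P U X) (hY : Codescent P U Y) :
    objProp P.weq Set.univ η := by
  intro c _
  have hQη : P.weq (((qFunctor U.N).map η).app c) :=
    U.N.weq_map_of_cofibrant P ((evaluation C S).obj c)
      (fun _ _ j _ _ hw hc => U.weq_app_of_trivCof j hw hc c)
      (U.N.cof_initial_to_cofRep X) (U.N.cof_initial_to_cofRep Y)
      (U.N.weq_qFunctor_map (U.weq_eq ▸ hη))
  have hsq := congr_app (U.N.qFunctor_map_comp_cofRepHom η) c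
  simp only [NatTrans.comp_app] at hsq
  refine P.weq_cancel_left _ _ (hX c) ?_
  rw [← hsq]
  exact P.weq_comp _ _ hQη (hY c)

/-- rigidity of codescending objects (Balmer–Matthey, Cor. 5.3). -/
theorem statement_6 {S : Type u} [Category.{v} S] [HasLimits S] [HasColimits S]
    (P : ModelStructure S) (I J : MorphismProperty S) (hcg : IsCofGen P I J)
    {C : Type v} [SmallCategory C] (D : Set C) (U : RelStructure P C D)
    {X Y : C ⥤ S} (η : X ⟶ Y) (hη : objProp P.weq D η)
    (hX : Codescent P U X) (hY : Codescent P U Y) :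
    objProp P.weq Set.univ η :=
  statement_6_general P D U η hη hX hY
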